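/- Let z₁, z₂, w₁, w₂ be four points on the unit circle with z₁ ≠ z₂ and w₁ ≠ w₂, and let T be a Möbius transformation of the unit disk onto itself with T(w₁) = z₁ and T(w₂) = z₂ satisfying the cross-ratio relation (T(w)−z₁)/(T(w)−z₂) · (w₀−z₂)/(w₀−z₁) = (w−w₁)/(w−w₂) · (z₀−w₂)/(z₀−w₁) for suitable boundary points w₀, z₀. Then T'(w₁)·T'(w₂) = ((z₁−z₂)/(w₁−w₂))². -/

import Mathlib

open Complex

/-!
A linear fractional map `f w = (α w + β) / (γ w + δ)` has difference quotient
`(f w₁ - f w₂) / (w₁ - w₂) = (α δ - β γ) / ((γ w₁ + δ) (γ w₂ + δ))` and derivative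
`f' w = (α δ - β γ) / (γ w + δ)²`, so the square of the difference quotient is `f' w₁ · f' w₂`.
A disk automorphism is such a map whose pole `1 / conj a` lies outside the closed disk,
so the identity applies at any two distinct points of the unit circle.
-/

section LinearFractional

variable {𝕜 : Type*} [NontriviallyNormedField 𝕜] {α β γ δ : 𝕜}

theorem hasDerivAt_linearFractional {w : 𝕜} (hw : γ * w + δ ≠ 0) :
    HasDerivAt (fun w => (α * w + β) / (γ * w + δ)) ((α * δ - β * γ) / (γ * w + δ) ^ 2) w := by
  have hnum : HasDerivAt (fun w => α * w + β) α w := by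
    simpa using ((hasDerivAt_id w).const_mul α).add_const β
  have hden : HasDerivAt (fun w => γ * w + δ) γ w := by
    simpa using ((hasDerivAt_id w).const_mul γ).add_const δ
  exact (hnum.div hden hw).congr_deriv (by ring)

theorem linearFractional_sub_linearFractional {w₁ w₂ : 𝕜}
    (h₁ : γ * w₁ + δ ≠ 0) (h₂ : γ * w₂ + δ ≠ 0) :
    (α * w₁ + β) / (γ * w₁ + δ) - (α * w₂ + β) / (γ * w₂ + δ) =
      (α * δ - β * γ) * (w₁ - w₂) / ((γ * w₁ + δ) * (γ * w₂ + δ)) := by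
  rw [div_sub_div _ _ h₁ h₂]
  ring

theorem deriv_mul_deriv_eq_sq_slope_of_linearFractional {f : 𝕜 → 𝕜}
    (hf : ∀ w, f w = (α * w + β) / (γ * w + δ)) {w₁ w₂ : 𝕜} (hw : w₁ ≠ w₂)
    (h₁ : γ * w₁ + δ ≠ 0) (h₂ : γ * w₂ + δ ≠ 0) :
    deriv f w₁ * deriv f w₂ = ((f w₁ - f w₂) / (w₁ - w₂)) ^ 2 := by
  obtain rfl : f = fun w => (α * w + β) / (γ * w + δ) := funext hf
  have hsub : w₁ - w₂ ≠ 0 := sub_ne_zero.mpr hw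
  rw [(hasDerivAt_linearFractional h₁).deriv, (hasDerivAt_linearFractional h₂).deriv,
    linearFractional_sub_linearFractional h₁ h₂]
  field_simp

end LinearFractional

theorem one_sub_conj_mul_ne_zero {a w : ℂ} (ha : ‖a‖ < 1) (hw : ‖w‖ ≤ 1) :
    1 - starRingEnd ℂ a * w ≠ 0 := by
  refine sub_ne_zero.mpr fun h => (?_ : ‖starRingEnd ℂ a * w‖ < 1).ne (by rw [← h, norm_one])
  calc ‖starRingEnd ℂ a * w‖ = ‖a‖ * ‖w‖ := by rw [norm_mul, Complex.norm_conj]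
    _ ≤ ‖a‖ := mul_le_of_le_one_right (norm_nonneg a) hw
    _ < 1 := ha

theorem stmt2_general (z₁ z₂ w₁ w₂ : ℂ)
    (hw₁ : ‖w₁‖ = 1) (hw₂ : ‖w₂‖ = 1)
    (hw : w₁ ≠ w₂)
    (T : ℂ → ℂ) (a : ℂ) (θ : ℝ) (ha : ‖a‖ < 1)
    (hT : ∀ w, T w = Complex.exp (θ * I) * (w - a) / (1 - (starRingEnd ℂ) a * w))
    (hT₁ : T w₁ = z₁) (hT₂ : T w₂ = z₂) :
    deriv T w₁ * deriv T w₂ = ((z₁ - z₂) / (w₁ - w₂)) ^ 2 := by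
  set e := Complex.exp (θ * I)
  set c := starRingEnd ℂ a
  have hT' : ∀ w, T w = (e * w + -(e * a)) / (-c * w + 1) := fun w => by rw [hT]; ring
  have hden : ∀ w : ℂ, ‖w‖ = 1 → -c * w + 1 ≠ 0 := fun w hw_norm => by
    simpa [neg_mul, neg_add_eq_sub] using one_sub_conj_mul_ne_zero ha hw_norm.le
  rw [← hT₁, ← hT₂]
  exact deriv_mul_deriv_eq_sq_slope_of_linearFractional hT' hw (hden w₁ hw₁) (hden w₂ hw₂)

/-- Let `z₁, z₂, w₁, w₂` be four points on the unit circle with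
`z₁ ≠ z₂`, `w₁ ≠ w₂`, and let `T` be a Möbius transformation of the unit disk
onto itself with `T w₁ = z₁`, `T w₂ = z₂` satisfying the cross-ratio relation
`(T w − z₁)/(T w − z₂) · (w₀ − z₂)/(w₀ − z₁) = (w − w₁)/(w − w₂) · (z₀ − w₂)/(z₀ − w₁)`
for suitable boundary points `w₀, z₀`.  Then
`T'(w₁) · T'(w₂) = ((z₁ − z₂)/(w₁ − w₂))²`. -/
theorem stmt2 (z₁ z₂ w₁ w₂ w₀ z₀ : ℂ)
    (hz₁ : ‖z₁‖ = 1) (hz₂ : ‖z₂‖ = 1)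
    (hw₁ : ‖w₁‖ = 1) (hw₂ : ‖w₂‖ = 1)
    (hw₀ : ‖w₀‖ = 1) (hz₀ : ‖z₀‖ = 1)
    (hz : z₁ ≠ z₂) (hw : w₁ ≠ w₂)
    (T : ℂ → ℂ) (a : ℂ) (θ : ℝ) (ha : ‖a‖ < 1)
    (hT : ∀ w, T w = Complex.exp (θ * I) * (w - a) / (1 - (starRingEnd ℂ) a * w))
    (hmaps : Set.BijOn T (Metric.ball (0 : ℂ) 1) (Metric.ball (0 : ℂ) 1))
    (hT₁ : T w₁ = z₁) (hT₂ : T w₂ = z₂)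
    (hcross : ∀ w, w ≠ w₂ → T w ≠ z₂ →
      (T w - z₁) / (T w - z₂) * ((w₀ - z₂) / (w₀ - z₁)) =
        (w - w₁) / (w - w₂) * ((z₀ - w₂) / (z₀ - w₁))) :
    deriv T w₁ * deriv T w₂ = ((z₁ - z₂) / (w₁ - w₂)) ^ 2 :=
  stmt2_general z₁ z₂ w₁ w₂ hw₁ hw₂ hw T a θ ha hT hT₁ hT₂
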